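/- arXiv:2407.07261 — 3 statements merged into one kernel-verified Lean document; each statement's English description precedes it below -/
import Mathlib

section
/- Every u ∈ 𝓛 belongs to 𝓔 (that is, every continuously differentiable solution of u'(t) = B(t)u(t) is twice continuously differentiable and satisfies u''(t) = f(t)u(t) + A(u(t))); 𝓛 is a linear subspace of 𝓔; and for every t ∈ I, the evaluation map 𝓛 → V, u ↦ u(t), is a linear isomorphism. In other words, 𝓛 is a first-order subspace of 𝓔. -/
noncomputable section

variable {V : Type*} [NormedAddCommGroup V] [NormedSpace ℝ V]

/-- The space `𝓔` of (twice continuously differentiable) solutions of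
`u''(t) = f(t)·u(t) + A(u(t))` on `I`, extended by zero off `I`. -/
def solSpace (I : Set ℝ) (f : ℝ → ℝ) (A : V →L[ℝ] V) : Submodule ℝ (ℝ → V) where
  carrier := {u | (∀ t ∉ I, u t = 0) ∧ ∃ u' : ℝ → V,
      (∀ t ∈ I, HasDerivAt u (u' t) t) ∧
      (∀ t ∈ I, HasDerivAt u' (f t • u t + A (u t)) t)}
  zero_mem' := by
    refine ⟨fun t _ => rfl, 0, fun t ht => ?_, fun t ht => ?_⟩
    · simpa using hasDerivAt_const t (0 : V)
    · simpa using hasDerivAt_const t (0 : V)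
  add_mem' := by
    rintro u v ⟨hu0, u', hu1, hu2⟩ ⟨hv0, v', hv1, hv2⟩
    refine ⟨fun t ht => by simp [hu0 t ht, hv0 t ht], u' + v', fun t ht => ?_, fun t ht => ?_⟩
    · simpa using (hu1 t ht).add (hv1 t ht)
    · have h := (hu2 t ht).add (hv2 t ht)
      have he : f t • (u + v) t + A ((u + v) t)
          = f t • u t + A (u t) + (f t • v t + A (v t)) := by
        simp [smul_add]
        abel
      rw [he]
      simpa using h
  smul_mem' := by
    rintro c u ⟨hu0, u', hu1, hu2⟩
    refine ⟨fun t ht => by simp [hu0 t ht], c • u', fun t ht => ?_, fun t ht => ?_⟩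
    · simpa using (hu1 t ht).const_smul c
    · have h := (hu2 t ht).const_smul c
      have he : f t • (c • u) t + A ((c • u) t) = c • (f t • u t + A (u t)) := by
        simp [smul_add, smul_smul, mul_comm]
      rw [he]
      simpa using h

/-- The space `𝓛` of (continuously differentiable) solutions of `u'(t) = B(t)(u(t))` on `I`,
extended by zero off `I`. -/
def firstOrderSol (I : Set ℝ) (B : ℝ → V →L[ℝ] V) : Submodule ℝ (ℝ → V) where
  carrier := {u | (∀ t ∉ I, u t = 0) ∧ ∀ t ∈ I, HasDerivAt u (B t (u t)) t}
  zero_mem' := by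
    refine ⟨fun t _ => rfl, fun t ht => ?_⟩
    simpa using hasDerivAt_const t (0 : V)
  add_mem' := by
    rintro u v ⟨hu0, hu1⟩ ⟨hv0, hv1⟩
    refine ⟨fun t ht => by simp [hu0 t ht, hv0 t ht], fun t ht => ?_⟩
    have h := (hu1 t ht).add (hv1 t ht)
    have he : B t ((u + v) t) = B t (u t) + B t (v t) := by simp
    rw [he]
    simpa using h
  smul_mem' := by
    rintro c u ⟨hu0, hu1⟩
    refine ⟨fun t ht => by simp [hu0 t ht], fun t ht => ?_⟩
    have h := (hu1 t ht).const_smul c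
    have he : B t ((c • u) t) = c • B t (u t) := by simp
    rw [he]
    simpa using h

section AuxODE

open Set Filter
open scoped NNReal

variable {G : ℝ → V →L[ℝ] V} {u w : ℝ → V} {a b : ℝ}

/-- Solution predicate for the linear ODE `u' = G t (u t)` on the closed interval `[a, b]`. -/
def SolOn (G : ℝ → V →L[ℝ] V) (u : ℝ → V) (a b : ℝ) : Prop :=
  ∀ t ∈ Set.Icc a b, HasDerivWithinAt u (G t (u t)) (Set.Icc a b) t

theorem hasDerivWithinAt_singleton' (f : ℝ → V) (x : ℝ) (d : V) :
    HasDerivWithinAt f d {x} x := by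
  rw [hasDerivWithinAt_iff_hasFDerivWithinAt]
  simp only [HasFDerivWithinAt, nhdsWithin_singleton, hasFDerivAtFilter_iff_isLittleO,
    Asymptotics.isLittleO_pure, sub_self]
  simp

namespace SolOn

theorem continuousOn (h : SolOn G u a b) : ContinuousOn u (Set.Icc a b) :=
  fun t ht => (h t ht).continuousWithinAt

theorem hasDerivWithinAt_Ici (h : SolOn G u a b) {t : ℝ} (ht : t ∈ Set.Ico a b) :
    HasDerivWithinAt u (G t (u t)) (Set.Ici t) t :=
  (h t (Set.Ico_subset_Icc_self ht)).mono_of_mem_nhdsWithin (Icc_mem_nhdsGE_of_mem ht)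

theorem hasDerivWithinAt_Iic (h : SolOn G u a b) {t : ℝ} (ht : t ∈ Set.Ioc a b) :
    HasDerivWithinAt u (G t (u t)) (Set.Iic t) t :=
  (h t (Set.Ioc_subset_Icc_self ht)).mono_of_mem_nhdsWithin (Icc_mem_nhdsLE_of_mem ht)

theorem mono (h : SolOn G u a b) {a' b' : ℝ} (ha : a ≤ a') (hb : b' ≤ b) :
    SolOn G u a' b' := fun t ht =>
  (h t ⟨ha.trans ht.1, ht.2.trans hb⟩).mono (Set.Icc_subset_Icc ha hb)

theorem eqOn_right {L : ℝ≥0} (hlip : ∀ t, LipschitzWith L (G t))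
    (hu : SolOn G u a b) (hw : SolOn G w a b) (h : u a = w a) :
    Set.EqOn u w (Set.Icc a b) :=
  ODE_solution_unique hlip hu.continuousOn (fun _ ht => hu.hasDerivWithinAt_Ici ht)
    hw.continuousOn (fun _ ht => hw.hasDerivWithinAt_Ici ht) h

theorem eqOn_left {L : ℝ≥0} (hlip : ∀ t, LipschitzWith L (G t))
    (hu : SolOn G u a b) (hw : SolOn G w a b) (h : u b = w b) :
    Set.EqOn u w (Set.Icc a b) :=
  ODE_solution_unique_of_mem_Icc_left (s := fun _ => Set.univ)
    (fun t _ => (hlip t).lipschitzOnWith)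
    hu.continuousOn (fun _ ht => hu.hasDerivWithinAt_Iic ht) (fun _ _ => trivial)
    hw.continuousOn (fun _ ht => hw.hasDerivWithinAt_Iic ht) (fun _ _ => trivial) h

theorem glue {m c : ℝ} (hu : SolOn G u a m) (hw : SolOn G w m c) (ham : a ≤ m) (hmc : m ≤ c)
    (hmatch : w m = u m) :
    SolOn G (fun t => if t ≤ m then u t else w t) a c := by
  set U : ℝ → V := fun t => if t ≤ m then u t else w t with hU
  have hequ : ∀ s ∈ Set.Icc a m, U s = u s := fun s hs => if_pos hs.2
  have heqw : ∀ s ∈ Set.Icc m c, U s = w s := by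
    intro s hs
    rcases eq_or_lt_of_le hs.1 with h | h
    · simp [hU, ← h, hmatch]
    · exact if_neg (not_le.mpr h)
  intro t ht
  rcases lt_trichotomy t m with h | h | h
  · have htm : t ∈ Set.Icc a m := ⟨ht.1, h.le⟩
    have h1 : HasDerivWithinAt U (G t (U t)) (Set.Icc a m) t := by
      rw [hequ t htm]
      exact (hu t htm).congr hequ (hequ t htm)
    exact h1.mono_of_mem_nhdsWithin (mem_nhdsWithin.2
      ⟨Set.Iio m, isOpen_Iio, h, fun y hy => ⟨hy.2.1, hy.1.le⟩⟩)
  · subst h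
    have htm : t ∈ Set.Icc a t := ⟨ht.1, le_rfl⟩
    have htc : t ∈ Set.Icc t c := ⟨le_rfl, hmc⟩
    have h1 : HasDerivWithinAt U (G t (U t)) (Set.Icc a t) t := by
      rw [hequ t htm]
      exact (hu t htm).congr hequ (hequ t htm)
    have h2 : HasDerivWithinAt U (G t (U t)) (Set.Icc t c) t := by
      rw [heqw t htc]
      exact (hw t htc).congr heqw (heqw t htc)
    have h3 := h1.union h2
    rwa [Set.Icc_union_Icc_eq_Icc ham hmc] at h3
  · have htm : t ∈ Set.Icc m c := ⟨h.le, ht.2⟩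
    have h1 : HasDerivWithinAt U (G t (U t)) (Set.Icc m c) t := by
      rw [heqw t htm]
      exact (hw t htm).congr heqw (heqw t htm)
    exact h1.mono_of_mem_nhdsWithin (mem_nhdsWithin.2
      ⟨Set.Ioi m, isOpen_Ioi, h, fun y hy => ⟨hy.1.le, hy.2.2⟩⟩)

end SolOn

/-- Local existence for a globally bounded, globally Lipschitz linear ODE. -/
theorem solOn_local [CompleteSpace V] (hG : Continuous G) {L : ℝ≥0}
    (hGL : ∀ t, ‖G t‖ ≤ (L : ℝ)) (M : ℝ) {ε : ℝ} (hε : 0 < ε)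
    (hεC : ((L : ℝ) * (M + 1) + 1) * ε ≤ 1) (s : ℝ) (x : V) (hx : ‖x‖ ≤ M) :
    ∃ u : ℝ → V, u s = x ∧ SolOn G u (s - ε) (s + ε) := by
  have hM0 : 0 ≤ M := (norm_nonneg x).trans hx
  have hC0 : (0 : ℝ) ≤ (L : ℝ) * (M + 1) + 1 := by positivity
  have hpl : IsPicardLindelof (fun t y => G t y) (tmin := s - ε) (tmax := s + ε)
      ⟨s, by constructor <;> linarith⟩ x 1 0 ⟨(L : ℝ) * (M + 1) + 1, hC0⟩ L :=
    { lipschitzOnWith := fun t _ => ((G t).lipschitz.weaken (by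
        rw [← NNReal.coe_le_coe, coe_nnnorm]; exact hGL t)).lipschitzOnWith
      continuousOn := fun y _ => (hG.clm_apply continuous_const).continuousOn
      norm_le := by
        intro t _ y hy
        show _ ≤ (L : ℝ) * (M + 1) + 1
        have h1 : ‖y‖ ≤ M + 1 := by
          have h2 := norm_le_of_mem_closedBall hy
          push_cast at h2
          linarith
        have h3 : ‖G t y‖ ≤ ‖G t‖ * ‖y‖ := (G t).le_opNorm y
        have h4 : ‖G t‖ * ‖y‖ ≤ (L : ℝ) * (M + 1) :=
          mul_le_mul (hGL t) h1 (norm_nonneg _) L.coe_nonneg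
        linarith
      mul_max_le := by
        show ((L : ℝ) * (M + 1) + 1) * max ((s + ε) - s) (s - (s - ε))
          ≤ ((1 : ℝ≥0) : ℝ) - ((0 : ℝ≥0) : ℝ)
        rw [add_sub_cancel_left, sub_sub_cancel, max_self]
        push_cast
        linarith }
  obtain ⟨u, h1, h2⟩ := hpl.exists_eq_forall_mem_Icc_hasDerivWithinAt₀
  exact ⟨u, h1, h2⟩

/-- Global forward existence on `[a, b]` for a globally bounded linear ODE. -/
theorem solOn_forward [CompleteSpace V] (hG : Continuous G) {L : ℝ≥0}
    (hGL : ∀ t, ‖G t‖ ≤ (L : ℝ)) (hab : a ≤ b) (v : V) :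
    ∃ u : ℝ → V, u a = v ∧ SolOn G u a b := by
  have hL0 : (0 : ℝ) ≤ L := L.coe_nonneg
  set M : ℝ := ‖v‖ * Real.exp ((L : ℝ) * (b - a)) with hM
  have hM0 : 0 ≤ M := by positivity
  have hbound : ∀ s ∈ Set.Icc a b, ∀ u : ℝ → V, u a = v → SolOn G u a s →
      ∀ t ∈ Set.Icc a s, ‖u t‖ ≤ M := by
    intro s hs u hua hu t ht
    have key := norm_le_gronwallBound_of_norm_deriv_right_le (f' := fun r => G r (u r))
      (δ := ‖v‖) (K := (L : ℝ)) (ε := 0) (a := a) (b := s)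
      hu.continuousOn (fun r hr => hu.hasDerivWithinAt_Ici hr)
      (by rw [hua]) (fun r hr => by
        have h3 : ‖G r (u r)‖ ≤ ‖G r‖ * ‖u r‖ := (G r).le_opNorm _
        have h4 : ‖G r‖ * ‖u r‖ ≤ (L : ℝ) * ‖u r‖ :=
          mul_le_mul_of_nonneg_right (hGL r) (norm_nonneg _)
        linarith)
      t ht
    rw [gronwallBound_ε0] at key
    refine key.trans ?_
    have h5 : Real.exp ((L : ℝ) * (t - a)) ≤ Real.exp ((L : ℝ) * (b - a)) := by
      apply Real.exp_le_exp.mpr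
      have := ht.2
      have := hs.2
      nlinarith
    rw [hM]
    nlinarith [norm_nonneg v, Real.exp_pos ((L : ℝ) * (t - a))]
  set ε : ℝ := 1 / ((L : ℝ) * (M + 1) + 1) with hεdef
  have hC : (0 : ℝ) < (L : ℝ) * (M + 1) + 1 := by nlinarith
  have hε : 0 < ε := by positivity
  have hεC : ((L : ℝ) * (M + 1) + 1) * ε ≤ 1 := by
    rw [hεdef, mul_one_div, div_self hC.ne']
  set S : Set ℝ := {s | s ∈ Set.Icc a b ∧ ∃ u : ℝ → V, u a = v ∧ SolOn G u a s} with hS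
  have haS : a ∈ S := by
    refine ⟨⟨le_rfl, hab⟩, fun _ => v, rfl, ?_⟩
    intro t ht
    rw [Set.Icc_self] at ht ⊢
    rcases ht with rfl
    exact hasDerivWithinAt_singleton' _ _ _
  have hkey : ∀ s ∈ S, min b (s + ε) ∈ S := by
    rintro s ⟨hs, u, hua, hu⟩
    have hus : ‖u s‖ ≤ M := hbound s hs u hua hu s ⟨hs.1, le_rfl⟩
    obtain ⟨w, hws, hw⟩ := solOn_local hG hGL M hε hεC s (u s) hus
    set c := min b (s + ε) with hc
    have hsc : s ≤ c := le_min hs.2 (by linarith)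
    have hw' : SolOn G w s c := hw.mono (by linarith) (min_le_right _ _)
    have hg := hu.glue hw' hs.1 hsc hws
    refine ⟨⟨le_trans hs.1 hsc, min_le_left _ _⟩, _, ?_, hg⟩
    simp only [if_pos hs.1]
    exact hua
  have hbdd : BddAbove S := ⟨b, fun s hs => hs.1.2⟩
  have hne : S.Nonempty := ⟨a, haS⟩
  obtain ⟨s, hsS, hslt⟩ := exists_lt_of_lt_csSup hne
    (show sSup S - ε / 2 < sSup S by linarith)
  have hcS := hkey s hsS
  rcases le_or_gt b (s + ε) with hbe | hbe
  · rw [min_eq_left hbe] at hcS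
    exact hcS.2
  · exfalso
    rw [min_eq_right hbe.le] at hcS
    have h6 : s + ε ≤ sSup S := le_csSup hbdd hcS
    linarith

/-- Global backward existence (value prescribed at the right endpoint). -/
theorem solOn_backward [CompleteSpace V] (hG : Continuous G) {L : ℝ≥0}
    (hGL : ∀ t, ‖G t‖ ≤ (L : ℝ)) (hab : a ≤ b) (v : V) :
    ∃ u : ℝ → V, u b = v ∧ SolOn G u a b := by
  set G' : ℝ → V →L[ℝ] V := fun t => -G (-t) with hG'
  have hG'c : Continuous G' := (hG.comp continuous_neg).neg
  have hG'L : ∀ t, ‖G' t‖ ≤ (L : ℝ) := fun t => by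
    rw [hG']; simpa using hGL (-t)
  obtain ⟨w, hwb, hw⟩ := solOn_forward hG'c hG'L (neg_le_neg hab) v
  refine ⟨fun t => w (-t), by simpa using hwb, ?_⟩
  intro t ht
  have hmem : -t ∈ Set.Icc (-b) (-a) := ⟨neg_le_neg ht.2, neg_le_neg ht.1⟩
  have hd := hw (-t) hmem
  have hneg : HasDerivWithinAt (fun x : ℝ => -x) (-1) (Set.Icc a b) t :=
    (hasDerivAt_neg t).hasDerivWithinAt
  have hmaps : Set.MapsTo (fun x : ℝ => -x) (Set.Icc a b) (Set.Icc (-b) (-a)) :=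
    fun y hy => ⟨neg_le_neg hy.2, neg_le_neg hy.1⟩
  have := hd.scomp t hneg hmaps
  convert this using 1
  · rfl
  simp [hG']

/-- Global existence on `[a, b]` with value prescribed at any point `c ∈ [a, b]`. -/
theorem solOn_exists [CompleteSpace V] (hG : Continuous G) {L : ℝ≥0}
    (hGL : ∀ t, ‖G t‖ ≤ (L : ℝ)) {c : ℝ} (hac : a ≤ c) (hcb : c ≤ b) (v : V) :
    ∃ u : ℝ → V, u c = v ∧ SolOn G u a b := by
  obtain ⟨u₁, hu₁c, hu₁⟩ := solOn_backward hG hGL hac v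
  obtain ⟨u₂, hu₂c, hu₂⟩ := solOn_forward hG hGL hcb v
  refine ⟨fun t => if t ≤ c then u₁ t else u₂ t, by simp [hu₁c], ?_⟩
  exact hu₁.glue hu₂ hac hcb (by rw [hu₂c, hu₁c])

/-- A continuous extension of `B` off the interval, globally bounded and Lipschitz. -/
theorem exists_clamped {B : ℝ → V →L[ℝ] V} {I : Set ℝ} (hIopen : IsOpen I)
    (hBc : ContinuousOn B I) (hab : a ≤ b) (hsub : Set.Icc a b ⊆ I) :
    ∃ (G : ℝ → V →L[ℝ] V) (L : ℝ≥0), Continuous G ∧ (∀ t ∈ Set.Icc a b, G t = B t) ∧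
      (∀ t, ‖G t‖ ≤ (L : ℝ)) ∧ (∀ t, LipschitzWith L (G t)) := by
  set clamp : ℝ → ℝ := fun t => max a (min t b) with hclamp
  have hclampmem : ∀ t, clamp t ∈ Set.Icc a b := fun t =>
    ⟨le_max_left _ _, max_le hab (min_le_right _ _)⟩
  have hclampcont : Continuous clamp := continuous_const.max (continuous_id.min continuous_const)
  have hclampfix : ∀ t ∈ Set.Icc a b, clamp t = t := fun t ht => by
    rw [hclamp]; simp only [min_eq_left ht.2, max_eq_right ht.1]
  set G : ℝ → V →L[ℝ] V := fun t => B (clamp t) with hG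
  have hGc : Continuous G := by
    rw [continuous_iff_continuousAt]
    intro t
    exact (hBc.continuousAt (hIopen.mem_nhds (hsub (hclampmem t)))).comp
      hclampcont.continuousAt
  obtain ⟨C, hC⟩ := isCompact_Icc.exists_bound_of_continuousOn (hBc.mono hsub)
  refine ⟨G, ⟨max C 0, le_max_right _ _⟩, hGc, fun t ht => by show B (clamp t) = B t; rw [hclampfix t ht], ?_, ?_⟩
  · intro t
    exact le_max_of_le_left (hC _ (hclampmem t))
  · intro t
    refine (G t).lipschitz.weaken ?_
    change ((‖G t‖₊ : ℝ≥0) : ℝ) ≤ max C 0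
    rw [coe_nnnorm]
    exact le_max_of_le_left (hC _ (hclampmem t))

/-- Existence for the ODE `u' = B t u` on a compact subinterval of `I`, with value prescribed
at any point of the subinterval. -/
theorem solOnB_exists [CompleteSpace V] {B : ℝ → V →L[ℝ] V} {I : Set ℝ} (hIopen : IsOpen I)
    (hBc : ContinuousOn B I) {c : ℝ} (hac : a ≤ c) (hcb : c ≤ b)
    (hsub : Set.Icc a b ⊆ I) (v : V) :
    ∃ u : ℝ → V, u c = v ∧ SolOn B u a b := by
  obtain ⟨G, L, hGc, hGB, hGL, _⟩ := exists_clamped hIopen hBc (hac.trans hcb) hsub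
  obtain ⟨u, huc, hu⟩ := solOn_exists hGc hGL hac hcb v
  refine ⟨u, huc, fun t ht => ?_⟩
  have := hu t ht
  rwa [hGB t ht] at this

/-- Uniqueness for the ODE `u' = B t u` on a compact subinterval of `I`, from a value at
either endpoint. -/
theorem solOnB_unique {B : ℝ → V →L[ℝ] V} {I : Set ℝ} (hIopen : IsOpen I)
    (hBc : ContinuousOn B I) (hab : a ≤ b) (hsub : Set.Icc a b ⊆ I)
    (hu : SolOn B u a b) (hw : SolOn B w a b) {c : ℝ} (hc : c = a ∨ c = b)
    (h : u c = w c) : Set.EqOn u w (Set.Icc a b) := by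
  obtain ⟨G, L, hGc, hGB, hGL, hGlip⟩ := exists_clamped hIopen hBc hab hsub
  have hu' : SolOn G u a b := fun t ht => by rw [hGB t ht]; exact hu t ht
  have hw' : SolOn G w a b := fun t ht => by rw [hGB t ht]; exact hw t ht
  rcases hc with rfl | rfl
  · exact hu'.eqOn_right hGlip hw' h
  · exact hu'.eqOn_left hGlip hw' h

theorem mem_firstOrderSol' {I : Set ℝ} {B : ℝ → V →L[ℝ] V} {u : ℝ → V} :
    u ∈ firstOrderSol I B ↔
      (∀ t ∉ I, u t = 0) ∧ ∀ t ∈ I, HasDerivAt u (B t (u t)) t := Iff.rfl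

theorem mem_solSpace' {I : Set ℝ} {f : ℝ → ℝ} {A : V →L[ℝ] V} {u : ℝ → V} :
    u ∈ solSpace I f A ↔ (∀ t ∉ I, u t = 0) ∧ ∃ u' : ℝ → V,
      (∀ t ∈ I, HasDerivAt u (u' t) t) ∧
      (∀ t ∈ I, HasDerivAt u' (f t • u t + A (u t)) t) := Iff.rfl

end AuxODE

/-- Every solution of `u' = B(t)u` lies in `𝓔` (i.e. `𝓛` is a linear subspace of `𝓔`), and
for every `t ∈ I` the evaluation map `𝓛 → V`, `u ↦ u(t)`, is a linear isomorphism: `𝓛` is a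
first-order subspace of `𝓔`. -/
theorem stmt_9 {V : Type*} [NormedAddCommGroup V] [NormedSpace ℝ V] [FiniteDimensional ℝ V]
    (g : V →ₗ[ℝ] V →ₗ[ℝ] ℝ) (hg_symm : ∀ v w : V, g v w = g w v)
    (hg_nondeg : ∀ v : V, (∀ w : V, g v w = 0) → v = 0)
    (A : V →L[ℝ] V) (hA : ∀ v w : V, g (A v) w = g v (A w))
    (I : Set ℝ) (hIopen : IsOpen I) (hIne : I.Nonempty) (hIconn : I.OrdConnected)
    (f : ℝ → ℝ) (hf : ContDiffOn ℝ (⊤ : ℕ∞) f I)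
    (B : ℝ → V →L[ℝ] V) (hB : ContDiffOn ℝ (⊤ : ℕ∞) B I)
    (hRic : ∀ t ∈ I,
      HasDerivAt B (f t • ContinuousLinearMap.id ℝ V + A - (B t).comp (B t)) t) :
    firstOrderSol I B ≤ solSpace I f A ∧
    (∀ t ∈ I, ∃ e : firstOrderSol I B ≃ₗ[ℝ] V,
      ∀ u : firstOrderSol I B, e u = (u : ℝ → V) t) := by
  classical
  have hBc : ContinuousOn B I := (hB.continuousOn)
  constructor
  · -- `𝓛 ≤ 𝓔`
    intro u hu
    obtain ⟨h0, h1⟩ := mem_firstOrderSol'.mp hu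
    refine mem_solSpace'.mpr ⟨h0, fun t => B t (u t), h1, fun t ht => ?_⟩
    have hd := (hRic t ht).clm_apply (h1 t ht)
    convert hd using 1
    simp only [ContinuousLinearMap.sub_apply, ContinuousLinearMap.add_apply,
      ContinuousLinearMap.smul_apply, ContinuousLinearMap.coe_id', id_eq,
      ContinuousLinearMap.coe_comp', Function.comp_apply]
    abel
  · intro t₀ ht₀
    set ev : firstOrderSol I B →ₗ[ℝ] V :=
      { toFun := fun u => (u : ℝ → V) t₀
        map_add' := fun u w => rfl
        map_smul' := fun c u => rfl } with hev
    have hminI : ∀ t ∈ I, min t t₀ ∈ I := fun t ht => by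
      rcases le_total t t₀ with h | h
      · rwa [min_eq_left h]
      · rwa [min_eq_right h]
    have hmaxI : ∀ t ∈ I, max t t₀ ∈ I := fun t ht => by
      rcases le_total t t₀ with h | h
      · rwa [max_eq_right h]
      · rwa [max_eq_left h]
    have hinj : Function.Injective ev := by
      intro u₁ u₂ h
      obtain ⟨h10, h11⟩ := mem_firstOrderSol'.mp u₁.2
      obtain ⟨h20, h21⟩ := mem_firstOrderSol'.mp u₂.2
      apply Subtype.ext
      funext t
      by_cases ht : t ∈ I
      · have hsub : Set.Icc (min t t₀) (max t t₀) ⊆ I :=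
          hIconn.out (hminI t ht) (hmaxI t ht)
        have hu1 : SolOn B (u₁ : ℝ → V) (min t t₀) (max t t₀) := fun s hs =>
          (h11 s (hsub hs)).hasDerivWithinAt
        have hu2 : SolOn B (u₂ : ℝ → V) (min t t₀) (max t t₀) := fun s hs =>
          (h21 s (hsub hs)).hasDerivWithinAt
        have ht₀ab : t₀ = min t t₀ ∨ t₀ = max t t₀ := by
          rcases le_total t t₀ with h' | h'
          · right; rw [max_eq_right h']
          · left; rw [min_eq_right h']
        have heq := solOnB_unique hIopen hBc min_le_max hsub hu1 hu2 ht₀ab h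
        exact heq ⟨min_le_left t t₀, le_max_left t t₀⟩
      · rw [h10 t ht, h20 t ht]
    have hsurj : Function.Surjective ev := by
      intro v
      have hex : ∀ t ∈ I, ∃ w : ℝ → V, w t₀ = v ∧ SolOn B w (min t t₀) (max t t₀) := by
        intro t ht
        exact solOnB_exists hIopen hBc (min_le_right t t₀) (le_max_right t t₀)
          (hIconn.out (hminI t ht) (hmaxI t ht)) v
      choose! w hw1 hw2 using hex
      set u : ℝ → V := fun t => if t ∈ I then w t t else 0 with hu
      have hud : ∀ t ∈ I, HasDerivAt u (B t (u t)) t := by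
        intro t ht
        set a := min t t₀ with ha
        set b := max t t₀ with hb
        have hab : a ≤ b := min_le_max
        have haI : a ∈ I := hminI t ht
        have hbI : b ∈ I := hmaxI t ht
        obtain ⟨δ₁, hδ₁, hball₁⟩ := Metric.isOpen_iff.mp hIopen a haI
        obtain ⟨δ₂, hδ₂, hball₂⟩ := Metric.isOpen_iff.mp hIopen b hbI
        set a' := a - δ₁ / 2 with ha'
        set b' := b + δ₂ / 2 with hb'
        have ha'I : a' ∈ I := by
          apply hball₁
          rw [Metric.mem_ball, Real.dist_eq]
          have h7 : a' - a = -(δ₁ / 2) := by rw [ha']; ring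
          rw [h7, abs_neg, abs_of_nonneg (by linarith)]
          linarith
        have hb'I : b' ∈ I := by
          apply hball₂
          rw [Metric.mem_ball, Real.dist_eq]
          have h7 : b' - b = δ₂ / 2 := by rw [hb']; ring
          rw [h7, abs_of_nonneg (by linarith)]
          linarith
        have ha'a : a' < a := by rw [ha']; linarith
        have hbb' : b < b' := by rw [hb']; linarith
        have hsub' : Set.Icc a' b' ⊆ I := hIconn.out ha'I hb'I
        have hat₀ : a ≤ t₀ := min_le_right _ _
        have ht₀b : t₀ ≤ b := le_max_right _ _
        obtain ⟨W, hW1, hW2⟩ := solOnB_exists hIopen hBc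
          (le_trans ha'a.le hat₀) (le_trans ht₀b hbb'.le) hsub' v
        have heqset : ∀ s ∈ Set.Ioo a' b', u s = W s := by
          intro s hs
          have hsI : s ∈ I := hsub' (Set.Ioo_subset_Icc_self hs)
          have h1 : u s = w s s := if_pos hsI
          have ha'min : a' ≤ min s t₀ := by
            rcases le_total s t₀ with h' | h'
            · rw [min_eq_left h']; exact hs.1.le
            · rw [min_eq_right h']; linarith
          have hmaxb' : max s t₀ ≤ b' := by
            rcases le_total s t₀ with h' | h'
            · rw [max_eq_right h']; linarith
            · rw [max_eq_left h']; exact hs.2.le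
          have hWs : SolOn B W (min s t₀) (max s t₀) := hW2.mono ha'min hmaxb'
          have hws' : SolOn B (w s) (min s t₀) (max s t₀) := hw2 s hsI
          have ht₀mem : t₀ = min s t₀ ∨ t₀ = max s t₀ := by
            rcases le_total s t₀ with h' | h'
            · right; rw [max_eq_right h']
            · left; rw [min_eq_right h']
          have heq := solOnB_unique hIopen hBc min_le_max
            (hIconn.out (hminI s hsI) (hmaxI s hsI)) hws' hWs ht₀mem
            (by rw [hw1 s hsI, hW1])
          have h2 := heq ⟨min_le_left s t₀, le_max_left s t₀⟩
          rw [h1, h2]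
        have htmem : t ∈ Set.Ioo a' b' :=
          ⟨lt_of_lt_of_le ha'a (min_le_left t t₀), lt_of_le_of_lt (le_max_left t t₀) hbb'⟩
        have hWd : HasDerivAt W (B t (W t)) t :=
          (hW2 t (Set.Ioo_subset_Icc_self htmem)).hasDerivAt
            (Icc_mem_nhds htmem.1 htmem.2)
        have hevW : u =ᶠ[nhds t] W :=
          Filter.eventuallyEq_of_mem (isOpen_Ioo.mem_nhds htmem) heqset
        have h3 := hWd.congr_of_eventuallyEq hevW
        rwa [← heqset t htmem] at h3
      have humem : u ∈ firstOrderSol I B :=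
        mem_firstOrderSol'.mpr ⟨fun t ht => if_neg ht, hud⟩
      refine ⟨⟨u, humem⟩, ?_⟩
      show u t₀ = v
      rw [hu]
      simp only [if_pos ht₀]
      exact hw1 t₀ ht₀
    exact ⟨LinearEquiv.ofBijective ev ⟨hinj, hsurj⟩, fun u => rfl⟩
end
end

section
/- Ω(u,w) = 0 for all u, w ∈ 𝓛 (that is, 𝓛 is a Lagrangian subspace of the symplectic vector space (𝓔,Ω)) if and only if B(t) is self-adjoint with respect to ⟨·,·⟩ for every t ∈ I. -/
noncomputable section

variable {V : Type*} [NormedAddCommGroup V] [NormedSpace ℝ V]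

section LinODE
open Set
set_option linter.unusedSectionVars false

theorem lin_uniq [CompleteSpace V] {B : ℝ → V →L[ℝ] V} {a b : ℝ} (hab : a ≤ b)
    (hBc : ContinuousOn B (Icc a b))
    {u w : ℝ → V}
    (hu : ∀ t ∈ Icc a b, HasDerivAt u (B t (u t)) t)
    (hw : ∀ t ∈ Icc a b, HasDerivAt w (B t (w t)) t)
    {c : ℝ} (hc : c ∈ Icc a b) (heq : u c = w c) :
    EqOn u w (Icc a b) := by
  obtain ⟨K, hK⟩ := isCompact_Icc.exists_bound_of_continuousOn hBc
  have hK0 : (0:ℝ) ≤ K := le_trans (norm_nonneg _) (hK a ⟨le_rfl, hab⟩)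
  set cl : ℝ → ℝ := fun t => max a (min b t) with hcl
  have hclmem : ∀ t, cl t ∈ Icc a b := fun t => ⟨le_max_left _ _, max_le hab (min_le_left _ _)⟩
  have hcleq : ∀ t ∈ Icc a b, cl t = t := fun t ht => by
    simp only [hcl]
    rw [min_eq_right ht.2, max_eq_right ht.1]
  set v : ℝ → V → V := fun t x => B (cl t) x with hv
  have hlip : ∀ t : ℝ, LipschitzOnWith ⟨K, hK0⟩ (v t) univ := fun t =>
    (((B (cl t)).lipschitz).weaken (by
      apply NNReal.coe_le_coe.mp
      exact hK _ (hclmem t))).lipschitzOnWith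
  have hu' : ∀ t ∈ Icc a b, HasDerivAt u (v t (u t)) t := fun t ht => by
    simp only [hv, hcleq t ht]; exact hu t ht
  have hw' : ∀ t ∈ Icc a b, HasDerivAt w (v t (w t)) t := fun t ht => by
    simp only [hv, hcleq t ht]; exact hw t ht
  have hright : EqOn u w (Icc c b) := by
    refine ODE_solution_unique_of_mem_Icc_right (s := fun _ => (univ : Set V)) (fun t _ => hlip t)
      (fun t ht => (hu t ⟨hc.1.trans ht.1, ht.2⟩).continuousAt.continuousWithinAt)
      (fun t ht => (hu' t ⟨hc.1.trans ht.1, ht.2.le⟩).hasDerivWithinAt)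
      (fun _ _ => mem_univ _)
      (fun t ht => (hw t ⟨hc.1.trans ht.1, ht.2⟩).continuousAt.continuousWithinAt)
      (fun t ht => (hw' t ⟨hc.1.trans ht.1, ht.2.le⟩).hasDerivWithinAt)
      (fun _ _ => mem_univ _) heq
  have hleft : EqOn u w (Icc a c) := by
    refine ODE_solution_unique_of_mem_Icc_left (s := fun _ => (univ : Set V)) (fun t _ => hlip t)
      (fun t ht => (hu t ⟨ht.1, ht.2.trans hc.2⟩).continuousAt.continuousWithinAt)
      (fun t ht => (hu' t ⟨ht.1.le, ht.2.trans hc.2⟩).hasDerivWithinAt)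
      (fun _ _ => mem_univ _)
      (fun t ht => (hw t ⟨ht.1, ht.2.trans hc.2⟩).continuousAt.continuousWithinAt)
      (fun t ht => (hw' t ⟨ht.1.le, ht.2.trans hc.2⟩).hasDerivWithinAt)
      (fun _ _ => mem_univ _) heq
  intro t ht
  rcases le_total t c with h | h
  · exact hleft ⟨ht.1, h⟩
  · exact hright ⟨h, ht.2⟩

theorem lin_local [CompleteSpace V] {B : ℝ → V →L[ℝ] V} {I : Set ℝ} (hIopen : IsOpen I)
    (hBc : ContinuousOn B I) {σ : ℝ} (hσ : σ ∈ I) (M : ℝ) (hM : 0 ≤ M) :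
    ∃ ε > (0:ℝ), ∀ s ∈ Icc (σ - ε) (σ + ε), ∀ y : V, ‖y‖ ≤ M →
      ∃ u : ℝ → V, u s = y ∧ ∀ t ∈ Ioo (s - ε) (s + ε), HasDerivAt u (B t (u t)) t := by
  obtain ⟨r, hr0, hrI⟩ := Metric.isOpen_iff.mp hIopen σ hσ
  set δ : ℝ := r / 3 with hδ
  have hδ0 : (0:ℝ) < δ := by positivity
  have hsub : Icc (σ - 2*δ) (σ + 2*δ) ⊆ I := by
    intro t ht
    apply hrI
    rw [Metric.mem_ball, Real.dist_eq]
    have h1 : |t - σ| ≤ 2*δ := abs_le.mpr ⟨by linarith [ht.1], by linarith [ht.2]⟩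
    have h2 : 2*δ < r := by rw [hδ]; linarith
    linarith
  obtain ⟨K, hK⟩ := isCompact_Icc.exists_bound_of_continuousOn (hBc.mono hsub)
  set K' : ℝ := max K 0 with hK'def
  have hK' : ∀ t ∈ Icc (σ - 2*δ) (σ + 2*δ), ‖B t‖ ≤ K' :=
    fun t ht => (hK t ht).trans (le_max_left _ _)
  have hK'0 : (0:ℝ) ≤ K' := le_max_right _ _
  set C : ℝ := K' * (M + 1) + 1 with hC
  have hC0 : (0:ℝ) < C := by positivity
  refine ⟨min δ (1 / C), lt_min hδ0 (by positivity), fun s hs y hy => ?_⟩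
  set ε : ℝ := min δ (1 / C) with hε
  have hε0 : (0:ℝ) < ε := lt_min hδ0 (by positivity)
  have hεδ : ε ≤ δ := min_le_left _ _
  have hsub2 : Icc (s - ε) (s + ε) ⊆ Icc (σ - 2*δ) (σ + 2*δ) := by
    intro t ht
    have h1 := hs.1
    have h2 := hs.2
    exact ⟨by linarith [ht.1], by linarith [ht.2]⟩
  have hpl : IsPicardLindelof (fun t x => B t x) (tmin := s-ε) (tmax := s+ε)
      ⟨s, ⟨by linarith, by linarith⟩⟩ y ⟨1, zero_le_one⟩ 0 ⟨C, hC0.le⟩ ⟨K', hK'0⟩ :=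
    { lipschitzOnWith := fun t ht => ((B t).lipschitz.weaken (by
        apply NNReal.coe_le_coe.mp
        exact hK' t (hsub2 ht))).lipschitzOnWith
      continuousOn := fun x _ => (hBc.mono (hsub2.trans hsub)).clm_apply continuousOn_const
      norm_le := fun t ht x hx => by
        show ‖B t x‖ ≤ C
        have h1 : ‖B t x‖ ≤ ‖B t‖ * ‖x‖ := (B t).le_opNorm x
        have h2 : ‖B t‖ ≤ K' := hK' t (hsub2 ht)
        have h3 : ‖x - y‖ ≤ 1 := mem_closedBall_iff_norm.mp hx
        have h4 : ‖x‖ - ‖y‖ ≤ ‖x - y‖ := norm_sub_norm_le x y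
        have h5 : ‖x‖ ≤ M + 1 := by linarith
        calc ‖B t x‖ ≤ ‖B t‖ * ‖x‖ := h1
          _ ≤ K' * (M + 1) := mul_le_mul h2 h5 (norm_nonneg _) hK'0
          _ ≤ C := by linarith
      mul_max_le := by
        show C * max (s + ε - s) (s - (s - ε)) ≤ 1 - 0
        rw [sub_zero]
        have h1 : max (s + ε - s) (s - (s - ε)) = ε := by
          rw [add_sub_cancel_left, sub_sub_cancel, max_self]
        rw [h1]
        calc C * ε ≤ C * (1 / C) := mul_le_mul_of_nonneg_left (min_le_right _ _) hC0.le
          _ = 1 := by rw [mul_one_div, div_self hC0.ne'] }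
  obtain ⟨u, hu0, hu⟩ := hpl.exists_eq_forall_mem_Icc_hasDerivWithinAt₀
  exact ⟨u, hu0, fun t ht => (hu t (Ioo_subset_Icc_self ht)).hasDerivAt
    (Icc_mem_nhds ht.1 ht.2)⟩

theorem lin_bound [CompleteSpace V] {B : ℝ → V →L[ℝ] V} {a s K : ℝ} (has : a ≤ s)
    (hK : ∀ t ∈ Icc a s, ‖B t‖ ≤ K)
    {u : ℝ → V} (hu : ∀ t ∈ Icc a s, HasDerivAt u (B t (u t)) t) :
    ‖u s‖ ≤ ‖u a‖ * Real.exp (K * (s - a)) := by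
  have h := norm_le_gronwallBound_of_norm_deriv_right_le (f := u)
    (f' := fun t => B t (u t)) (δ := ‖u a‖) (K := K) (ε := 0) (a := a) (b := s)
    (fun t ht => (hu t ht).continuousAt.continuousWithinAt)
    (fun t ht => (hu t (Ico_subset_Icc_self ht)).hasDerivWithinAt)
    le_rfl
    (fun t ht => by
      have h1 : ‖B t (u t)‖ ≤ ‖B t‖ * ‖u t‖ := (B t).le_opNorm (u t)
      have h2 : ‖B t‖ ≤ K := hK t (Ico_subset_Icc_self ht)
      have h3 : ‖B t‖ * ‖u t‖ ≤ K * ‖u t‖ :=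
        mul_le_mul_of_nonneg_right h2 (norm_nonneg _)
      linarith)
  have h2 := h s ⟨has, le_rfl⟩
  rwa [gronwallBound_ε0] at h2

theorem lin_ext_right [CompleteSpace V] {B : ℝ → V →L[ℝ] V} {I : Set ℝ} (hIopen : IsOpen I)
    (hIconn : I.OrdConnected) (hBc : ContinuousOn B I)
    {t₀ b : ℝ} (ht₀ : t₀ ∈ I) (hb : b ∈ I) (ht₀b : t₀ ≤ b) (x₀ : V) :
    ∃ u : ℝ → V, u t₀ = x₀ ∧ ∀ t ∈ Icc t₀ b, HasDerivAt u (B t (u t)) t := by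
  have hIccI : Icc t₀ b ⊆ I := hIconn.out ht₀ hb
  set S : Set ℝ := {s | s ∈ Icc t₀ b ∧ ∃ u : ℝ → V, u t₀ = x₀ ∧
      ∀ t ∈ Icc t₀ s, HasDerivAt u (B t (u t)) t} with hS
  have ht₀S : t₀ ∈ S := by
    obtain ⟨ε, hε0, hloc⟩ := lin_local hIopen hBc ht₀ ‖x₀‖ (norm_nonneg _)
    obtain ⟨u, hu0, hu⟩ := hloc t₀ ⟨by linarith, by linarith⟩ x₀ le_rfl
    refine ⟨⟨le_rfl, ht₀b⟩, u, hu0, fun t ht => ?_⟩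
    have hteq : t = t₀ := le_antisymm ht.2 ht.1
    subst hteq
    exact hu t ⟨by linarith, by linarith⟩
  have hSne : S.Nonempty := ⟨t₀, ht₀S⟩
  have hSbdd : BddAbove S := ⟨b, fun s hs => hs.1.2⟩
  set σ := sSup S with hσdef
  have hσmem : σ ∈ Icc t₀ b := ⟨le_csSup hSbdd ht₀S, csSup_le hSne fun s hs => hs.1.2⟩
  have hσI : σ ∈ I := hIccI hσmem
  obtain ⟨K, hKb⟩ := isCompact_Icc.exists_bound_of_continuousOn (hBc.mono hIccI)
  set K' : ℝ := max K 0 with hK'def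
  have hK' : ∀ t ∈ Icc t₀ b, ‖B t‖ ≤ K' := fun t ht => (hKb t ht).trans (le_max_left _ _)
  have hK'0 : (0:ℝ) ≤ K' := le_max_right _ _
  set M : ℝ := ‖x₀‖ * Real.exp (K' * (b - t₀)) with hM
  have hM0 : (0:ℝ) ≤ M := by positivity
  have hbound : ∀ s ∈ Icc t₀ b, ∀ u : ℝ → V, u t₀ = x₀ →
      (∀ t ∈ Icc t₀ s, HasDerivAt u (B t (u t)) t) → ‖u s‖ ≤ M := by
    intro s hs u hu0 hu
    have h1 := lin_bound hs.1 (fun t ht => hK' t ⟨ht.1, ht.2.trans hs.2⟩) hu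
    rw [hu0] at h1
    refine h1.trans ?_
    rw [hM]
    have := Real.exp_le_exp.mpr (mul_le_mul_of_nonneg_left
      (by linarith [hs.2] : s - t₀ ≤ b - t₀) hK'0)
    exact mul_le_mul_of_nonneg_left this (norm_nonneg _)
  obtain ⟨ε, hε0, hloc⟩ := lin_local hIopen hBc hσI M hM0
  have hstep : ∀ s ∈ S, s ∈ Icc (σ - ε) (σ + ε) → ∀ d, s ≤ d → d < s + ε → d ≤ b → d ∈ S := by
    intro s hsS hsε d hsd hdε hdb
    obtain ⟨hsIcc, u, hu0, hu⟩ := hsS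
    have hus : ‖u s‖ ≤ M := hbound s hsIcc u hu0 hu
    obtain ⟨w, hw0, hw⟩ := hloc s hsε (u s) hus
    have hdmem : d ∈ Icc t₀ b := ⟨hsIcc.1.trans hsd, hdb⟩
    rcases eq_or_lt_of_le hsIcc.1 with heq | hlt
    · -- t₀ = s : use w directly
      subst heq
      refine ⟨hdmem, w, by rw [hw0, hu0], fun t ht => ?_⟩
      exact hw t ⟨by linarith [ht.1], lt_of_le_of_lt ht.2 hdε⟩
    · -- t₀ < s : glue
      set c : ℝ := max t₀ (s - ε/2) with hc
      have hct₀ : t₀ ≤ c := le_max_left _ _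
      have hcs : c < s := max_lt hlt (by linarith)
      have hIccc : Icc c s ⊆ I := fun t ht =>
        hIccI ⟨hct₀.trans ht.1, ht.2.trans hsIcc.2⟩
      have heqON : EqOn u w (Icc c s) := by
        refine lin_uniq hcs.le (hBc.mono hIccc)
          (fun t ht => hu t ⟨hct₀.trans ht.1, ht.2⟩)
          (fun t ht => hw t ⟨by
            have h5 : s - ε/2 ≤ c := le_max_right _ _
            linarith [ht.1], by linarith [ht.2]⟩)
          (c := s) ⟨hcs.le, le_rfl⟩ hw0.symm
      set h : ℝ → V := fun t => if t < s then u t else w t with hh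
      have hht₀ : h t₀ = x₀ := by rw [hh]; simp only [if_pos hlt]; exact hu0
      refine ⟨hdmem, h, hht₀, fun t ht => ?_⟩
      rcases lt_trichotomy t s with htlt | hteq | htgt
      · have hev : h =ᶠ[nhds t] u :=
          Filter.eventuallyEq_of_mem (Iio_mem_nhds htlt) fun x hx => if_pos hx
        have hd := (hu t ⟨ht.1, htlt.le⟩).congr_of_eventuallyEq hev
        have hht : h t = u t := if_pos htlt
        rw [hht]; exact hd
      · subst hteq
        have hev : h =ᶠ[nhds t] w := by
          refine Filter.eventuallyEq_of_mem (Ioo_mem_nhds hcs (show t < t + ε by linarith))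
            fun x hx => ?_
          by_cases hxs : x < t
          · show (if x < t then u x else w x) = w x
            rw [if_pos hxs]
            exact heqON ⟨hx.1.le, hxs.le⟩
          · show (if x < t then u x else w x) = w x
            rw [if_neg hxs]
        have hd := (hw t ⟨by linarith, by linarith⟩).congr_of_eventuallyEq hev
        have hht : h t = w t := if_neg (lt_irrefl t)
        rw [hht]; exact hd
      · have hev : h =ᶠ[nhds t] w :=
          Filter.eventuallyEq_of_mem (Ioi_mem_nhds htgt) fun x hx =>
            if_neg (not_lt.mpr (le_of_lt hx))
        have hd := (hw t ⟨by linarith, by linarith [ht.2]⟩).congr_of_eventuallyEq hev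
        have hht : h t = w t := if_neg (not_lt.mpr htgt.le)
        rw [hht]; exact hd
  have hσS : σ ∈ S := by
    obtain ⟨s, hsS, hslt⟩ := exists_lt_of_lt_csSup hSne (show σ - ε < σ by linarith)
    have hsσ : s ≤ σ := le_csSup hSbdd hsS
    exact hstep s hsS ⟨by linarith, by linarith⟩ σ hsσ (by linarith) hσmem.2
  have hbS : b ∈ S := by
    rcases eq_or_lt_of_le hσmem.2 with heq | hlt
    · rwa [heq] at hσS
    · exfalso
      set d : ℝ := min b (σ + ε/2) with hd
      have hσd : σ < d := lt_min hlt (by linarith)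
      have hdS : d ∈ S := hstep σ hσS ⟨by linarith, by linarith⟩ d hσd.le
        (by rw [hd]; exact lt_of_le_of_lt (min_le_right _ _) (by linarith))
        (min_le_left _ _)
      exact absurd (le_csSup hSbdd hdS) (not_le.mpr hσd)
  exact ⟨hbS.2.choose, hbS.2.choose_spec.1, hbS.2.choose_spec.2⟩

theorem lin_ext_left [CompleteSpace V] {B : ℝ → V →L[ℝ] V} {I : Set ℝ} (hIopen : IsOpen I)
    (hIconn : I.OrdConnected) (hBc : ContinuousOn B I)
    {a t₀ : ℝ} (ha : a ∈ I) (ht₀ : t₀ ∈ I) (hat₀ : a ≤ t₀) (x₀ : V) :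
    ∃ u : ℝ → V, u t₀ = x₀ ∧ ∀ t ∈ Icc a t₀, HasDerivAt u (B t (u t)) t := by
  set I' : Set ℝ := (fun t => -t) ⁻¹' I with hI'
  have hI'open : IsOpen I' := hIopen.preimage continuous_neg
  have hI'conn : I'.OrdConnected := by
    refine ⟨fun x hx y hy z hz => ?_⟩
    simp only [hI', mem_preimage] at *
    exact hIconn.out hy hx ⟨neg_le_neg hz.2, neg_le_neg hz.1⟩
  set B' : ℝ → V →L[ℝ] V := fun s => -(B (-s)) with hB'
  have hB'c : ContinuousOn B' I' := by
    have hmt : MapsTo (fun t : ℝ => -t) I' I := fun x hx => hx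
    exact (hBc.comp continuous_neg.continuousOn hmt).neg
  have hmem1 : -t₀ ∈ I' := by simp only [hI', mem_preimage, neg_neg]; exact ht₀
  have hmem2 : -a ∈ I' := by simp only [hI', mem_preimage, neg_neg]; exact ha
  obtain ⟨v, hv0, hv⟩ := lin_ext_right hI'open hI'conn hB'c hmem1 hmem2
    (neg_le_neg hat₀) x₀
  refine ⟨fun t => v (-t), by simpa using hv0, fun t ht => ?_⟩
  have hvd : HasDerivAt v (B' (-t) (v (-t))) (-t) :=
    hv (-t) ⟨neg_le_neg ht.2, neg_le_neg ht.1⟩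
  have hcomp := HasDerivAt.scomp (𝕜 := ℝ) t hvd (hasDerivAt_neg t)
  have heq : (-1 : ℝ) • (B' (-t) (v (-t))) = B t (v (-t)) := by
    simp [hB', neg_neg]
  rw [heq] at hcomp
  exact hcomp

theorem lin_ext_two [CompleteSpace V] {B : ℝ → V →L[ℝ] V} {I : Set ℝ} (hIopen : IsOpen I)
    (hIconn : I.OrdConnected) (hBc : ContinuousOn B I)
    {a t₀ b : ℝ} (ha : a ∈ I) (hb : b ∈ I) (hat₀ : a ≤ t₀) (ht₀b : t₀ ≤ b) (x₀ : V) :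
    ∃ u : ℝ → V, u t₀ = x₀ ∧ ∀ t ∈ Icc a b, HasDerivAt u (B t (u t)) t := by
  have ht₀ : t₀ ∈ I := hIconn.out ha hb ⟨hat₀, ht₀b⟩
  obtain ⟨up, hup0, hup⟩ := lin_ext_right hIopen hIconn hBc ht₀ hb ht₀b x₀
  obtain ⟨um, hum0, hum⟩ := lin_ext_left hIopen hIconn hBc ha ht₀ hat₀ x₀
  set h : ℝ → V := fun t => if t ≤ t₀ then um t else up t with hh
  have hht₀ : h t₀ = x₀ := by simp only [hh, if_pos le_rfl]; exact hum0
  refine ⟨h, hht₀, fun t ht => ?_⟩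
  rcases lt_trichotomy t t₀ with hlt | heq | hgt
  · have hev : h =ᶠ[nhds t] um :=
      Filter.eventuallyEq_of_mem (Iio_mem_nhds hlt) fun x hx => if_pos (le_of_lt hx)
    have hd := (hum t ⟨ht.1, hlt.le⟩).congr_of_eventuallyEq hev
    have hht : h t = um t := if_pos hlt.le
    rw [hht]; exact hd
  · subst heq
    have hht : h t = um t := if_pos le_rfl
    have heqon : ∀ x ∈ Ici t, h x = up x := by
      intro x hx
      rcases eq_or_lt_of_le (mem_Ici.mp hx) with hxe | hxl
      · rw [← hxe, hht, hum0, hup0]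
      · exact if_neg (not_le.mpr hxl)
    have hrt : h t = up t := heqon t (mem_Ici.mpr le_rfl)
    have hleft : HasDerivWithinAt h (B t (h t)) (Iic t) t := by
      rw [hht]
      exact ((hum t ⟨ht.1, le_rfl⟩).hasDerivWithinAt).congr (fun x hx => if_pos hx) hht
    have hright : HasDerivWithinAt h (B t (h t)) (Ici t) t := by
      rw [hrt]
      exact ((hup t ⟨le_rfl, ht.2⟩).hasDerivWithinAt).congr heqon hrt
    have := hleft.union hright
    rw [Iic_union_Ici] at this
    exact this.hasDerivAt (by simp)
  · have hev : h =ᶠ[nhds t] up :=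
      Filter.eventuallyEq_of_mem (Ioi_mem_nhds hgt) fun x hx => if_neg (not_le.mpr hx)
    have hd := (hup t ⟨hgt.le, ht.2⟩).congr_of_eventuallyEq hev
    have hht : h t = up t := if_neg (not_le.mpr hgt)
    rw [hht]; exact hd

theorem lin_global [CompleteSpace V] {B : ℝ → V →L[ℝ] V} {I : Set ℝ} (hIopen : IsOpen I)
    (hIconn : I.OrdConnected) (hBc : ContinuousOn B I)
    {t₀ : ℝ} (ht₀ : t₀ ∈ I) (x₀ : V) :
    ∃ u : ℝ → V, u t₀ = x₀ ∧ (∀ t ∉ I, u t = 0) ∧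
      ∀ t ∈ I, HasDerivAt u (B t (u t)) t := by
  classical
  have hex : ∀ c : ℝ, c ∈ I → ∃ u : ℝ → V, u t₀ = x₀ ∧
      ∀ t ∈ Icc (min c t₀) (max c t₀), HasDerivAt u (B t (u t)) t := by
    intro c hc
    have hmin : min c t₀ ∈ I := by
      rcases min_choice c t₀ with h | h <;> rw [h] <;> assumption
    have hmax : max c t₀ ∈ I := by
      rcases max_choice c t₀ with h | h <;> rw [h] <;> assumption
    exact lin_ext_two hIopen hIconn hBc hmin hmax (min_le_right _ _) (le_max_right _ _) x₀
  choose! sol hsol0 hsolD using hex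
  set U : ℝ → V := fun t => if t ∈ I then sol t t else 0 with hU
  have coh : ∀ a b : ℝ, a ∈ I → b ∈ I → a ≤ t₀ → t₀ ≤ b → ∀ w : ℝ → V, w t₀ = x₀ →
      (∀ t ∈ Icc a b, HasDerivAt w (B t (w t)) t) → ∀ s ∈ Icc a b, U s = w s := by
    intro a b haI hbI hat₀ ht₀b w hw0 hw s hs
    have habI : Icc a b ⊆ I := hIconn.out haI hbI
    have hsI : s ∈ I := habI hs
    have hJsub : Icc (min s t₀) (max s t₀) ⊆ Icc a b :=
      Icc_subset_Icc (le_min hs.1 hat₀) (max_le hs.2 ht₀b)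
    have heqon : EqOn (sol s) w (Icc (min s t₀) (max s t₀)) := by
      refine lin_uniq (min_le_max) (hBc.mono (hJsub.trans habI)) (hsolD s hsI)
        (fun t ht => hw t (hJsub ht)) (c := t₀) ⟨min_le_right _ _, le_max_right _ _⟩ ?_
      rw [hsol0 s hsI, hw0]
    have : U s = sol s s := by simp only [hU, if_pos hsI]
    rw [this, heqon ⟨min_le_left _ _, le_max_left _ _⟩]
  have hU0 : ∀ t ∉ I, U t = 0 := fun t ht => by simp only [hU, if_neg ht]
  have hUt₀ : U t₀ = x₀ := by
    simp only [hU, if_pos ht₀]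
    exact hsol0 t₀ ht₀
  refine ⟨U, hUt₀, hU0, fun t₁ ht₁ => ?_⟩
  obtain ⟨r, hr0, hrI⟩ := Metric.isOpen_iff.mp hIopen t₁ ht₁
  have hmem1 : t₁ - r/2 ∈ I := hrI (by
    rw [Metric.mem_ball, Real.dist_eq]
    rw [abs_of_nonpos (by linarith)]
    linarith)
  have hmem2 : t₁ + r/2 ∈ I := hrI (by
    rw [Metric.mem_ball, Real.dist_eq]
    rw [abs_of_nonneg (by linarith)]
    linarith)
  set a : ℝ := min t₀ (t₁ - r/2) with hadef
  set b : ℝ := max t₀ (t₁ + r/2) with hbdef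
  have haI : a ∈ I := by rcases min_choice t₀ (t₁ - r/2) with h | h <;> rw [hadef, h] <;> assumption
  have hbI : b ∈ I := by rcases max_choice t₀ (t₁ + r/2) with h | h <;> rw [hbdef, h] <;> assumption
  obtain ⟨w, hw0, hw⟩ := lin_ext_two hIopen hIconn hBc haI hbI (min_le_left _ _)
    (le_max_left _ _) x₀
  have hat₁ : a < t₁ := lt_of_le_of_lt (min_le_right _ _) (by linarith)
  have ht₁b : t₁ < b := lt_of_lt_of_le (by linarith) (le_max_right _ _)
  have hUw : ∀ s ∈ Icc a b, U s = w s :=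
    coh a b haI hbI (min_le_left _ _) (le_max_left _ _) w hw0 hw
  have hev : U =ᶠ[nhds t₁] w :=
    Filter.eventuallyEq_of_mem (Icc_mem_nhds hat₁ ht₁b) hUw
  have hd := (hw t₁ ⟨hat₁.le, ht₁b.le⟩).congr_of_eventuallyEq hev
  rw [show U t₁ = w t₁ from hUw t₁ ⟨hat₁.le, ht₁b.le⟩]
  exact hd


end LinODE

/-- `𝓛` is a Lagrangian subspace of `(𝓔,Ω)` — i.e. `Ω(u,w) = 0` for all `u,w ∈ 𝓛` — if and
only if `B(t)` is self-adjoint with respect to `⟨·,·⟩` for every `t ∈ I`. -/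

theorem stmt_10 {V : Type*} [NormedAddCommGroup V] [NormedSpace ℝ V] [FiniteDimensional ℝ V]
    (g : V →ₗ[ℝ] V →ₗ[ℝ] ℝ) (hg_symm : ∀ v w : V, g v w = g w v)
    (hg_nondeg : ∀ v : V, (∀ w : V, g v w = 0) → v = 0)
    (A : V →L[ℝ] V) (hA : ∀ v w : V, g (A v) w = g v (A w))
    (I : Set ℝ) (hIopen : IsOpen I) (hIne : I.Nonempty) (hIconn : I.OrdConnected)
    (f : ℝ → ℝ) (hf : ContDiffOn ℝ (⊤ : ℕ∞) f I)
    (B : ℝ → V →L[ℝ] V) (hB : ContDiffOn ℝ (⊤ : ℕ∞) B I)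
    (hRic : ∀ t ∈ I,
      HasDerivAt B (f t • ContinuousLinearMap.id ℝ V + A - (B t).comp (B t)) t) :
    (∀ u ∈ firstOrderSol I B, ∀ w ∈ firstOrderSol I B, ∀ t ∈ I,
        g (deriv u t) (w t) - g (u t) (deriv w t) = 0)
      ↔ (∀ t ∈ I, ∀ v w : V, g (B t v) w = g v (B t w)) := by
  haveI : CompleteSpace V := FiniteDimensional.complete ℝ V
  constructor
  · intro hLag t ht v w
    obtain ⟨u1, hu1t, hu1z, hu1d⟩ := lin_global hIopen hIconn hB.continuousOn ht v
    obtain ⟨u2, hu2t, hu2z, hu2d⟩ := lin_global hIopen hIconn hB.continuousOn ht w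
    have hm1 : u1 ∈ firstOrderSol I B := ⟨hu1z, hu1d⟩
    have hm2 : u2 ∈ firstOrderSol I B := ⟨hu2z, hu2d⟩
    have h := hLag u1 hm1 u2 hm2 t ht
    rw [(hu1d t ht).deriv, (hu2d t ht).deriv, hu1t, hu2t] at h
    linarith
  · intro hsa u hu w hw t ht
    obtain ⟨hu0, hud⟩ := hu
    obtain ⟨hw0, hwd⟩ := hw
    rw [(hud t ht).deriv, (hwd t ht).deriv, hsa t ht (u t) (w t), sub_self]
end
end

section
/- Suppose σ restricts to a bijection of 𝓛 onto 𝓛. Then for every ε ∈ I, the determinant of the linear map σ|_𝓛 : 𝓛 → 𝓛 equals det(C)·exp(−∫_{ε}^{qε+p} tr(B(t)) dt); in particular, the right-hand side does not depend on the choice of ε ∈ I. -/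
noncomputable section

variable {V : Type*} [NormedAddCommGroup V] [NormedSpace ℝ V]

/-- The action `(σu)(t) = C (u (q⁻¹(t − p)))` of a triple `σ = (q,p,C)`. -/
def sigmaAct (q p : ℝ) (C : V →L[ℝ] V) (u : ℝ → V) : ℝ → V :=
  fun t => C (u (q⁻¹ * (t - p)))


section AuxLinearODE
open MeasureTheory Set intervalIntegral Nat
open scoped Classical

section LinearODE

variable {E : Type*} [NormedAddCommGroup E] [NormedSpace ℝ E]

private lemma hasDerivAt_primitive' [CompleteSpace E]
    {I : Set ℝ} (hIopen : IsOpen I) (hIconn : I.OrdConnected)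
    {g : ℝ → E} (hg : ContinuousOn g I) {ε t : ℝ} (hε : ε ∈ I) (ht : t ∈ I) :
    HasDerivAt (fun u => ∫ s in ε..u, g s) (g t) t :=
  intervalIntegral.integral_hasDerivAt_right
    ((hg.mono (hIconn.uIcc_subset hε ht)).intervalIntegrable)
    (hg.stronglyMeasurableAtFilter hIopen t ht)
    (hg.continuousAt (hIopen.mem_nhds ht))

variable {V : Type*} [NormedAddCommGroup V] [NormedSpace ℝ V] [CompleteSpace V]

/-- Picard iterates for the linear ODE `Φ' = B Φ`, `Φ ε = id`. -/
def picard (B : ℝ → V →L[ℝ] V) (ε : ℝ) : ℕ → ℝ → (V →L[ℝ] V)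
  | 0 => fun _ => ContinuousLinearMap.id ℝ V
  | (n+1) => fun t => ∫ s in ε..t, (B s).comp (picard B ε n s)

variable {I : Set ℝ} {B : ℝ → V →L[ℝ] V} {ε : ℝ}

lemma picard_contOn (hIopen : IsOpen I) (hIconn : I.OrdConnected)
    (hB : ContinuousOn B I) (hε : ε ∈ I) :
    ∀ n, ContinuousOn (picard B ε n) I := by
  intro n
  induction n with
  | zero => exact continuousOn_const
  | succ n ih =>
      intro t ht
      have hg : ContinuousOn (fun s => (B s).comp (picard B ε n s)) I := by
        apply ContinuousOn.clm_comp hB ih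
      exact ((hasDerivAt_primitive' hIopen hIconn hg hε ht).continuousAt).continuousWithinAt

lemma picard_norm_le (hIopen : IsOpen I) (hIconn : I.OrdConnected)
    (hB : ContinuousOn B I) (hε : ε ∈ I)
    {J : Set ℝ} (hJ : J ⊆ I) (hJconn : J.OrdConnected) (hεJ : ε ∈ J)
    {K : ℝ} (hK : ∀ s ∈ J, ‖B s‖ ≤ K) :
    ∀ n, ∀ s ∈ J, ‖picard B ε n s‖ ≤ K ^ n * |s - ε| ^ n / n ! := by
  have hK0 : 0 ≤ K := le_trans (norm_nonneg _) (hK ε hεJ)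
  intro n
  induction n with
  | zero => intro s _; simp [picard]; exact ContinuousLinearMap.norm_id_le
  | succ n ih =>
      intro s hs
      have huIcc : uIcc ε s ⊆ J := hJconn.uIcc_subset hεJ hs
      have key : ‖picard B ε (n+1) s‖ ≤ ∫ τ in Set.uIoc ε s, K ^ (n+1) * |τ - ε| ^ n / n ! := by
        refine le_trans (intervalIntegral.norm_integral_le_integral_norm_uIoc) ?_
        apply MeasureTheory.setIntegral_mono_on
        · have hc : ContinuousOn (fun τ => ‖(B τ).comp (picard B ε n τ)‖) (uIcc ε s) :=
            ((hB.mono (fun x hx => hJ (huIcc hx))).clm_comp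
              ((picard_contOn hIopen hIconn hB hε n).mono (fun x hx => hJ (huIcc hx)))).norm
          exact (hc.integrableOn_compact isCompact_uIcc).mono_set uIoc_subset_uIcc
        · apply Continuous.integrableOn_uIoc
          continuity
        · exact measurableSet_uIoc
        · intro τ hτ
          have hτJ : τ ∈ J := huIcc (uIoc_subset_uIcc hτ)
          calc ‖(B τ).comp (picard B ε n τ)‖ ≤ ‖B τ‖ * ‖picard B ε n τ‖ :=
                ContinuousLinearMap.opNorm_comp_le _ _
            _ ≤ K * (K ^ n * |τ - ε| ^ n / n !) := by
                apply mul_le_mul (hK τ hτJ) (ih τ hτJ) (norm_nonneg _) hK0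
            _ = K ^ (n+1) * |τ - ε| ^ n / n ! := by ring
      have h1 : ((n ! : ℕ) : ℝ) ≠ 0 := Nat.cast_ne_zero.2 n.factorial_ne_zero
      have h2 : ((n:ℝ) + 1) ≠ 0 := by positivity
      calc ‖picard B ε (n+1) s‖ ≤ ∫ τ in Set.uIoc ε s, K ^ (n+1) * |τ - ε| ^ n / n ! := key
        _ = K ^ (n+1) / n ! * ∫ τ in Set.uIoc ε s, |τ - ε| ^ n := by
            rw [← MeasureTheory.integral_const_mul]
            congr 1
            ext τ
            ring
        _ = K ^ (n+1) / n ! * (|s - ε| ^ (n+1) / (n+1)) := by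
            rw [integral_pow_abs_sub_uIoc]
        _ = K ^ (n+1) * |s - ε| ^ (n+1) / (n+1)! := by
            rw [Nat.factorial_succ]
            push_cast
            field_simp
/-- The fundamental solution, as sum of the Picard series. -/
def fundSol (B : ℝ → V →L[ℝ] V) (ε : ℝ) (t : ℝ) : V →L[ℝ] V :=
  ∑' n, picard B ε n t

lemma picard_summable (hIopen : IsOpen I) (hIconn : I.OrdConnected)
    (hB : ContinuousOn B I) (hε : ε ∈ I)
    {J : Set ℝ} (hJ : J ⊆ I) (hJconn : J.OrdConnected) (hεJ : ε ∈ J)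
    {K : ℝ} (hK : ∀ s ∈ J, ‖B s‖ ≤ K) {s : ℝ} (hs : s ∈ J) :
    Summable (fun n => picard B ε n s) := by
  apply Summable.of_norm_bounded (Real.summable_pow_div_factorial (K * |s - ε|))
  intro n
  calc ‖picard B ε n s‖ ≤ K ^ n * |s - ε| ^ n / n ! :=
        picard_norm_le hIopen hIconn hB hε hJ hJconn hεJ hK n s hs
    _ = (K * |s - ε|) ^ n / n ! := by rw [mul_pow]

lemma fundSol_hasSum (hIopen : IsOpen I) (hIconn : I.OrdConnected)
    (hB : ContinuousOn B I) (hε : ε ∈ I) {t : ℝ} (ht : t ∈ I) :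
    HasSum (fun n => picard B ε n t) (fundSol B ε t) := by
  obtain ⟨K, hK⟩ := isCompact_uIcc.exists_bound_of_continuousOn
    (hB.mono (hIconn.uIcc_subset hε ht))
  exact (picard_summable hIopen hIconn hB hε (hIconn.uIcc_subset hε ht) Set.ordConnected_uIcc
    left_mem_uIcc hK right_mem_uIcc).hasSum

omit [CompleteSpace V] in
lemma fundSol_at_eps : fundSol B ε ε = ContinuousLinearMap.id ℝ V := by
  rw [fundSol, tsum_eq_single 0]
  · rfl
  · rintro (_ | n) hn
    · exact absurd rfl hn
    · simp [picard]

lemma fundSol_integral_eq (hIopen : IsOpen I) (hIconn : I.OrdConnected)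
    (hB : ContinuousOn B I) (hε : ε ∈ I) {t : ℝ} (ht : t ∈ I) :
    fundSol B ε t
      = ContinuousLinearMap.id ℝ V + ∫ s in ε..t, (B s).comp (fundSol B ε s) := by
  set J := Set.uIcc ε t with hJdef
  have hJI : J ⊆ I := hIconn.uIcc_subset hε ht
  obtain ⟨K₀, hK₀⟩ := isCompact_uIcc.exists_bound_of_continuousOn (hB.mono hJI)
  set K := max K₀ 0 with hKdef
  have hK : ∀ s ∈ J, ‖B s‖ ≤ K := fun s hs => le_trans (hK₀ s hs) (le_max_left _ _)
  have hK0 : 0 ≤ K := le_max_right _ _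
  have hcont : ∀ n, ContinuousOn (fun s => (B s).comp (picard B ε n s)) J :=
    fun n => (hB.mono hJI).clm_comp ((picard_contOn hIopen hIconn hB hε n).mono hJI)
  have hIoc : Set.Ioc (min ε t) (max ε t) ⊆ J := Set.Ioc_subset_Icc_self
  have h1 : HasSum (fun n => ∫ s in ε..t, (B s).comp (picard B ε n s))
      (∫ s in ε..t, (B s).comp (fundSol B ε s)) := by
    apply intervalIntegral.hasSum_integral_of_dominated_convergence
      (bound := fun n s => K ^ (n+1) * |s - ε| ^ n / n !)
    · intro n
      exact ((hcont n).aestronglyMeasurable measurableSet_uIcc).mono_measure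
        (Measure.restrict_mono Set.uIoc_subset_uIcc le_rfl)
    · intro n
      refine Filter.Eventually.of_forall (fun s hs => ?_)
      have hsJ : s ∈ J := Set.uIoc_subset_uIcc hs
      calc ‖(B s).comp (picard B ε n s)‖ ≤ ‖B s‖ * ‖picard B ε n s‖ :=
            ContinuousLinearMap.opNorm_comp_le _ _
        _ ≤ K * (K ^ n * |s - ε| ^ n / n !) :=
            mul_le_mul (hK s hsJ)
              (picard_norm_le hIopen hIconn hB hε hJI Set.ordConnected_uIcc
                left_mem_uIcc hK n s hsJ) (norm_nonneg _) hK0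
        _ = K ^ (n+1) * |s - ε| ^ n / n ! := by ring
    · refine Filter.Eventually.of_forall (fun s _ => ?_)
      apply Summable.congr ((Real.summable_pow_div_factorial (K * |s - ε|)).mul_left K)
      intro n
      rw [mul_pow]
      ring
    · have heq : (fun s => ∑' n, K ^ (n+1) * |s - ε| ^ n / n !)
          = fun s => K * Real.exp (K * |s - ε|) := by
        funext s
        rw [Real.exp_eq_exp_ℝ, NormedSpace.exp_eq_tsum_div, ← tsum_mul_left]
        congr 1
        funext n
        rw [mul_pow]
        ring
      rw [heq]
      exact (continuous_const.mul (Real.continuous_exp.comp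
        (continuous_const.mul ((continuous_id.sub continuous_const).abs)))).intervalIntegrable ε t
    · refine Filter.Eventually.of_forall (fun s hs => ?_)
      have hsI : s ∈ I := hJI (Set.uIoc_subset_uIcc hs)
      exact (ContinuousLinearMap.compL ℝ V V V (B s)).hasSum
        (fundSol_hasSum hIopen hIconn hB hε hsI)
  have h3 : HasSum (fun n => picard B ε (n+1) t)
      (fundSol B ε t - ContinuousLinearMap.id ℝ V) := by
    have h := fundSol_hasSum hIopen hIconn hB hε ht
    have := (hasSum_nat_add_iff' (f := fun n => picard B ε n t) 1).2 h
    simpa [picard] using this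
  have h2 : (fun n => ∫ s in ε..t, (B s).comp (picard B ε n s))
      = fun n => picard B ε (n+1) t := rfl
  rw [h2] at h1
  rw [h1.unique h3]
  abel
lemma fundSol_continuousOn (hIopen : IsOpen I) (hIconn : I.OrdConnected)
    (hB : ContinuousOn B I) (hε : ε ∈ I) : ContinuousOn (fundSol B ε) I := by
  intro t₀ ht₀
  obtain ⟨r, hr, hball⟩ := Metric.isOpen_iff.1 hIopen t₀ ht₀
  set δ := r / 2 with hδdef
  have hδ : 0 < δ := by positivity
  have hsub : Set.Icc (t₀ - δ) (t₀ + δ) ⊆ I := by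
    intro x hx
    apply hball
    rw [Metric.mem_ball, Real.dist_eq, abs_sub_lt_iff]
    have h1 := hx.1
    have h2 := hx.2
    constructor <;> linarith
  set a := min ε (t₀ - δ) with hadef
  set b := max ε (t₀ + δ) with hbdef
  have haI : a ∈ I := by
    rcases min_cases ε (t₀ - δ) with ⟨h, _⟩ | ⟨h, _⟩ <;> rw [hadef, h]
    · exact hε
    · exact hsub ⟨le_refl _, by linarith⟩
  have hbI : b ∈ I := by
    rcases max_cases ε (t₀ + δ) with ⟨h, _⟩ | ⟨h, _⟩ <;> rw [hbdef, h]
    · exact hε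
    · exact hsub ⟨by linarith, le_refl _⟩
  have hJI : Set.Icc a b ⊆ I := hIconn.out haI hbI
  obtain ⟨K₀, hK₀⟩ := isCompact_Icc.exists_bound_of_continuousOn (hB.mono hJI)
  set K := max K₀ 0 with hKdef
  have hK : ∀ s ∈ Set.Icc a b, ‖B s‖ ≤ K := fun s hs => le_trans (hK₀ s hs) (le_max_left _ _)
  have hK0 : 0 ≤ K := le_max_right _ _
  have hεJ : ε ∈ Set.Icc a b := ⟨min_le_left _ _, le_max_left _ _⟩
  have hcont : ContinuousOn (fundSol B ε) (Set.Icc a b) := by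
    apply continuousOn_tsum (u := fun n => (K * (b - a)) ^ n / n !)
      (fun n => (picard_contOn hIopen hIconn hB hε n).mono hJI)
      (Real.summable_pow_div_factorial _)
    intro n x hx
    calc ‖picard B ε n x‖ ≤ K ^ n * |x - ε| ^ n / n ! :=
          picard_norm_le hIopen hIconn hB hε hJI Set.ordConnected_Icc hεJ hK n x hx
      _ = (K * |x - ε|) ^ n / n ! := by rw [mul_pow]
      _ ≤ (K * (b - a)) ^ n / n ! := by
          apply div_le_div_of_nonneg_right ?_ ?_ |>.trans_eq rfl
          · apply pow_le_pow_left₀ (by positivity)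
            apply mul_le_mul_of_nonneg_left ?_ hK0
            rw [abs_sub_le_iff]
            constructor <;> [linarith [hx.2, hεJ.1]; linarith [hx.1, hεJ.2]]
          · positivity
  have hmem : Set.Icc a b ∈ nhds t₀ := by
    apply Icc_mem_nhds
    · calc a ≤ t₀ - δ := min_le_right _ _
        _ < t₀ := by linarith
    · calc t₀ < t₀ + δ := by linarith
        _ ≤ b := le_max_right _ _
  have ht₀J : t₀ ∈ Set.Icc a b := ⟨by calc a ≤ t₀ - δ := min_le_right _ _
                                        _ ≤ t₀ := by linarith,
                                   by calc t₀ ≤ t₀ + δ := by linarith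
                                        _ ≤ b := le_max_right _ _⟩
  exact ((hcont t₀ ht₀J).continuousAt hmem).continuousWithinAt

lemma fundSol_hasDerivAt (hIopen : IsOpen I) (hIconn : I.OrdConnected)
    (hB : ContinuousOn B I) (hε : ε ∈ I) {t : ℝ} (ht : t ∈ I) :
    HasDerivAt (fundSol B ε) ((B t).comp (fundSol B ε t)) t := by
  have hg : ContinuousOn (fun s => (B s).comp (fundSol B ε s)) I :=
    hB.clm_comp (fundSol_continuousOn hIopen hIconn hB hε)
  have h := (hasDerivAt_primitive' hIopen hIconn hg hε ht).const_add
    (ContinuousLinearMap.id ℝ V)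
  apply h.congr_of_eventuallyEq
  filter_upwards [hIopen.mem_nhds ht] with x hx
  exact fundSol_integral_eq hIopen hIconn hB hε hx

lemma fundSol_apply_hasDerivAt (hIopen : IsOpen I) (hIconn : I.OrdConnected)
    (hB : ContinuousOn B I) (hε : ε ∈ I) {t : ℝ} (ht : t ∈ I) (x : V) :
    HasDerivAt (fun s => fundSol B ε s x) (B t (fundSol B ε t x)) t := by
  have h := (fundSol_hasDerivAt hIopen hIconn hB hε ht).clm_apply (hasDerivAt_const t x)
  simpa using h

lemma sol_eq_fundSol (hIopen : IsOpen I) (hIconn : I.OrdConnected)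
    (hB : ContinuousOn B I) (hε : ε ∈ I) {u : ℝ → V} (hu : u ∈ firstOrderSol I B)
    {t : ℝ} (ht : t ∈ I) : u t = fundSol B ε t (u ε) := by
  -- find a compact interval `Icc a b ⊆ I` whose interior contains `ε` and `t`
  set c := min ε t with hcdef
  set d := max ε t with hddef
  have hcI : c ∈ I := by
    rcases min_cases ε t with ⟨h, _⟩ | ⟨h, _⟩ <;> rw [hcdef, h] <;> assumption
  have hdI : d ∈ I := by
    rcases max_cases ε t with ⟨h, _⟩ | ⟨h, _⟩ <;> rw [hddef, h] <;> assumption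
  obtain ⟨r₁, hr₁, hball₁⟩ := Metric.isOpen_iff.1 hIopen c hcI
  obtain ⟨r₂, hr₂, hball₂⟩ := Metric.isOpen_iff.1 hIopen d hdI
  set a := c - r₁ / 2 with hadef
  set b := d + r₂ / 2 with hbdef
  have haI : a ∈ I := by
    apply hball₁
    rw [Metric.mem_ball, Real.dist_eq, abs_sub_lt_iff, hadef]
    constructor <;> linarith
  have hbI : b ∈ I := by
    apply hball₂
    rw [Metric.mem_ball, Real.dist_eq, abs_sub_lt_iff, hbdef]
    constructor <;> linarith
  have hJI : Set.Icc a b ⊆ I := hIconn.out haI hbI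
  have hcd : c ≤ d := min_le_max
  have hεmem : ε ∈ Set.Ioo a b := by
    constructor
    · calc a < c := by rw [hadef]; linarith
        _ ≤ ε := min_le_left _ _
    · calc ε ≤ d := le_max_left _ _
        _ < b := by rw [hbdef]; linarith
  have htmem : t ∈ Set.Ioo a b := by
    constructor
    · calc a < c := by rw [hadef]; linarith
        _ ≤ t := min_le_right _ _
    · calc t ≤ d := le_max_right _ _
        _ < b := by rw [hbdef]; linarith
  obtain ⟨K₀, hK₀⟩ := isCompact_Icc.exists_bound_of_continuousOn (hB.mono hJI)
  set K : NNReal := Real.toNNReal K₀ with hKdef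
  set v : ℝ → V → V := fun s x => if s ∈ Set.Icc a b then B s x else 0 with hvdef
  have hv : ∀ s, LipschitzOnWith K (v s) Set.univ := by
    intro s
    by_cases hs : s ∈ Set.Icc a b
    · have : v s = fun x => B s x := by funext x; rw [hvdef]; simp [hs]
      rw [this]
      refine ((B s).lipschitz.weaken ?_).lipschitzOnWith
      rw [← NNReal.coe_le_coe, coe_nnnorm]
      exact le_trans (hK₀ s hs) (Real.le_coe_toNNReal K₀)
    · have : v s = fun _ => (0 : V) := by funext x; rw [hvdef]; simp [hs]
      rw [this]
      exact ((LipschitzWith.const (0 : V)).weaken (by positivity)).lipschitzOnWith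
  have heq := ODE_solution_unique_of_mem_Ioo (v := v) (s := fun _ => Set.univ) (fun s _ => hv s) hεmem
    (f := u) (g := fun s => fundSol B ε s (u ε)) ?_ ?_ ?_
  · exact heq htmem
  · intro s hs
    refine ⟨?_, trivial⟩
    have hsJ : s ∈ Set.Icc a b := Set.Ioo_subset_Icc_self hs
    have : v s (u s) = B s (u s) := by rw [hvdef]; simp [hsJ]
    rw [this]
    exact hu.2 s (hJI hsJ)
  · intro s hs
    refine ⟨?_, trivial⟩
    have hsJ : s ∈ Set.Icc a b := Set.Ioo_subset_Icc_self hs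
    have : v s (fundSol B ε s (u ε)) = B s (fundSol B ε s (u ε)) := by rw [hvdef]; simp [hsJ]
    rw [this]
    exact fundSol_apply_hasDerivAt hIopen hIconn hB hε (hJI hsJ) (u ε)
  · show u ε = fundSol B ε ε (u ε)
    rw [fundSol_at_eps]
    rfl

lemma extend_mem_firstOrderSol (hIopen : IsOpen I) (hIconn : I.OrdConnected)
    (hB : ContinuousOn B I) (hε : ε ∈ I) (x : V) :
    (fun t => if t ∈ I then fundSol B ε t x else 0) ∈ firstOrderSol I B := by
  constructor
  · intro t ht
    simp [ht]
  · intro t ht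
    have h := fundSol_apply_hasDerivAt hIopen hIconn hB hε ht x
    have heq : (fun s => fundSol B ε s x) =ᶠ[nhds t]
        (fun s => if s ∈ I then fundSol B ε s x else 0) := by
      filter_upwards [hIopen.mem_nhds ht] with s hs
      simp [hs]
    have h2 := h.congr_of_eventuallyEq heq.symm
    simpa [ht] using h2
section Jacobi

variable {ι : Type*} [Fintype ι] [DecidableEq ι]

lemma det_norm_bound (m : ι → ι → ℝ) :
    ‖Matrix.det (Matrix.of m)‖ ≤ ((Fintype.card ι)! : ℝ) * ∏ i, ‖m i‖ := by
  rw [Matrix.det_apply]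
  refine le_trans (norm_sum_le _ _) ?_
  have hterm : ∀ σ : Equiv.Perm ι, ‖Equiv.Perm.sign σ • ∏ i, Matrix.of m (σ i) i‖
      ≤ ∏ i, ‖m i‖ := by
    intro σ
    have h1 : ‖Equiv.Perm.sign σ • ∏ i, Matrix.of m (σ i) i‖
        = ‖∏ i, Matrix.of m (σ i) i‖ := by
      rcases Int.units_eq_one_or (Equiv.Perm.sign σ) with h | h <;> simp [h]
    rw [h1, norm_prod]
    calc ∏ i, ‖Matrix.of m (σ i) i‖ ≤ ∏ i, ‖m (σ i)‖ := by
          apply Finset.prod_le_prod (fun i _ => norm_nonneg _)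
          intro i _
          exact norm_le_pi_norm (m (σ i)) i
      _ = ∏ i, ‖m i‖ := Equiv.prod_comp σ (fun j => ‖m j‖)
  calc (∑ σ : Equiv.Perm ι, ‖Equiv.Perm.sign σ • ∏ i, Matrix.of m (σ i) i‖)
      ≤ ∑ _σ : Equiv.Perm ι, ∏ i, ‖m i‖ := Finset.sum_le_sum (fun σ _ => hterm σ)
    _ = ((Fintype.card ι)! : ℝ) * ∏ i, ‖m i‖ := by
        rw [Finset.sum_const, Finset.card_univ, Fintype.card_perm, nsmul_eq_mul]

/-- The determinant as a continuous multilinear map in the rows. -/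
def detCMM (ι : Type*) [Fintype ι] [DecidableEq ι] :
    ContinuousMultilinearMap ℝ (fun _ : ι => ι → ℝ) ℝ :=
  MultilinearMap.mkContinuous
    (Matrix.detRowAlternating (n := ι) (R := ℝ)).toMultilinearMap
    ((Fintype.card ι)!) (fun m => det_norm_bound m)

lemma detCMM_apply (m : ι → ι → ℝ) : detCMM ι m = Matrix.det (Matrix.of m) := rfl

/-- Jacobi's formula (as an upper bound form): derivative of the determinant of a
matrix-valued curve. -/
lemma hasDerivAt_det {N : ℝ → ι → ι → ℝ} {N' : ι → ι → ℝ} {t : ℝ}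
    (h : HasDerivAt N N' t) :
    HasDerivAt (fun s => Matrix.det (Matrix.of (N s)))
      (∑ i, Matrix.det (Matrix.updateRow (Matrix.of (N t)) i (N' i))) t := by
  have hd := (detCMM ι).hasFDerivAt (x := N t)
  have hcomp := hd.comp_hasDerivAt t h
  have heq : (detCMM ι).linearDeriv (N t) N'
      = ∑ i, Matrix.det (Matrix.updateRow (Matrix.of (N t)) i (N' i)) := by
    rw [ContinuousMultilinearMap.linearDeriv_apply]
    rfl
  rw [← heq]
  exact hcomp

lemma sum_det_updateRow_mul (A M : Matrix ι ι ℝ) :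
    ∑ i, (M.updateRow i ((A * M) i)).det = A.trace * M.det := by
  have hrow : ∀ i, (M.updateRow i ((A * M) i)).det = A i i * M.det := by
    intro i
    have h : (A * M) i = ∑ j, A i j • M j := by
      funext k
      simp [Matrix.mul_apply, Finset.sum_apply]
    rw [h, Matrix.det_updateRow_sum]
    simp
  rw [Finset.sum_congr rfl (fun i _ => hrow i), ← Finset.sum_mul, Matrix.trace]
  rfl

end Jacobi
section Liouville

variable [FiniteDimensional ℝ V]

lemma fundSol_det (hIopen : IsOpen I) (hIconn : I.OrdConnected)
    (hB : ContinuousOn B I) (hε : ε ∈ I) {t : ℝ} (ht : t ∈ I) :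
    LinearMap.det ((fundSol B ε t : V →L[ℝ] V) : V →ₗ[ℝ] V)
      = Real.exp (∫ s in ε..t, LinearMap.trace ℝ V ((B s : V →L[ℝ] V) : V →ₗ[ℝ] V)) := by
  haveI : FiniteDimensional ℝ (V →L[ℝ] V) :=
    FiniteDimensional.of_injective
      (ContinuousLinearMap.coeLM (M := V) (N₃ := V) (R := ℝ) ℝ)
      (fun x y (h : (x : V →ₗ[ℝ] V) = y) => ContinuousLinearMap.coe_injective h)
  set n := Module.finrank ℝ V with hn
  set b : Module.Basis (Fin n) ℝ V := Module.finBasis ℝ V with hbdef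
  set P : (V →L[ℝ] V) →ₗ[ℝ] (Fin n → Fin n → ℝ) :=
    (LinearMap.toMatrix b b).toLinearMap ∘ₗ ContinuousLinearMap.coeLM ℝ with hPdef
  have hPapply : ∀ A : V →L[ℝ] V, P A = LinearMap.toMatrix b b (A : V →ₗ[ℝ] V) := fun A => rfl
  set Pc : (V →L[ℝ] V) →L[ℝ] (Fin n → Fin n → ℝ) :=
    ⟨P, P.continuous_of_finiteDimensional⟩ with hPcdef
  set τ : ℝ → ℝ := fun s => LinearMap.trace ℝ V ((B s : V →L[ℝ] V) : V →ₗ[ℝ] V) with hτdef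
  have hτcont : ContinuousOn τ I := by
    have hL : Continuous fun A : V →L[ℝ] V =>
        LinearMap.trace ℝ V ((A : V →L[ℝ] V) : V →ₗ[ℝ] V) :=
      LinearMap.continuous_of_finiteDimensional
        ((LinearMap.trace ℝ V) ∘ₗ ContinuousLinearMap.coeLM ℝ)
    exact hL.comp_continuousOn hB
  set W : ℝ → ℝ := fun s => Matrix.det (Matrix.of (Pc (fundSol B ε s))) with hWdef
  set Pm : (V →L[ℝ] V) → Matrix (Fin n) (Fin n) ℝ :=
    fun A => LinearMap.toMatrix b b (A : V →ₗ[ℝ] V) with hPmdef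
  have hW : ∀ r ∈ I, HasDerivAt W (Matrix.trace (Pm (B r)) * W r) r := by
    intro r hr
    have h1 : HasDerivAt (fun s => Pc (fundSol B ε s)) (Pc ((B r).comp (fundSol B ε r))) r :=
      Pc.hasFDerivAt.comp_hasDerivAt r (fundSol_hasDerivAt hIopen hIconn hB hε hr)
    have h2 := hasDerivAt_det (N := fun s => Pc (fundSol B ε s)) h1
    have h3 : Pc ((B r).comp (fundSol B ε r)) = fun i => (Pm (B r) * Pm (fundSol B ε r)) i := by
      show LinearMap.toMatrix b b (((B r).comp (fundSol B ε r) : V →L[ℝ] V) : V →ₗ[ℝ] V) = _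
      rw [ContinuousLinearMap.toLinearMap_comp, LinearMap.toMatrix_comp b b b]
    rw [h3] at h2
    have h4 : (∑ i, Matrix.det (Matrix.updateRow (Matrix.of (Pc (fundSol B ε r))) i
          ((Pm (B r) * Pm (fundSol B ε r)) i)))
        = Matrix.trace (Pm (B r)) * W r :=
      sum_det_updateRow_mul (Pm (B r)) (Pm (fundSol B ε r))
    rw [← h4]
    exact h2
  have hτeq : ∀ r, Matrix.trace (Pm (B r)) = τ r := by
    intro r
    show Matrix.trace (LinearMap.toMatrix b b ((B r : V →L[ℝ] V) : V →ₗ[ℝ] V))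
      = LinearMap.trace ℝ V ((B r : V →L[ℝ] V) : V →ₗ[ℝ] V)
    exact (LinearMap.trace_eq_matrix_trace ℝ b _).symm
  set G : ℝ → ℝ := fun s => W s * Real.exp (-∫ r in ε..s, τ r) with hGdef
  have hG : ∀ r ∈ I, HasDerivAt G 0 r := by
    intro r hr
    have hI1 : HasDerivAt (fun s => ∫ x in ε..s, τ x) (τ r) r :=
      hasDerivAt_primitive' hIopen hIconn hτcont hε hr
    have hexp : HasDerivAt (fun s => Real.exp (-∫ x in ε..s, τ x))
        (Real.exp (-∫ x in ε..r, τ x) * (-τ r)) r := hI1.neg.exp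
    have hprod := (hW r hr).mul hexp
    rw [hτeq] at hprod
    convert hprod using 1
    · rfl
    · rfl
    · rfl
    · ring
  have hGconst : G t = G ε := by
    have hsub : Set.uIcc ε t ⊆ I := hIconn.uIcc_subset hε ht
    have hcont : ContinuousOn G (Set.Icc (min ε t) (max ε t)) := by
      intro x hx
      exact ((hG x (hsub hx)).continuousAt).continuousWithinAt
    have := constant_of_has_deriv_right_zero hcont
      (fun x hx => (hG x (hsub (Set.Ico_subset_Icc_self hx))).hasDerivWithinAt)
    have h1 := this t ⟨min_le_right _ _, le_max_right _ _⟩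
    have h2 := this ε ⟨min_le_left _ _, le_max_left _ _⟩
    rw [h1, h2]
  have hGε : G ε = 1 := by
    have hWε : W ε = 1 := by
      rw [hWdef]
      show Matrix.det (Matrix.of (P (fundSol B ε ε))) = 1
      rw [fundSol_at_eps, hPapply]
      show Matrix.det (LinearMap.toMatrix b b (LinearMap.id)) = 1
      rw [LinearMap.toMatrix_id]
      exact Matrix.det_one
    simp [hGdef, hWε]
  have hdet : LinearMap.det ((fundSol B ε t : V →L[ℝ] V) : V →ₗ[ℝ] V) = W t := by
    rw [hWdef]
    show _ = Matrix.det (Matrix.of (P (fundSol B ε t)))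
    rw [hPapply]
    exact (LinearMap.det_toMatrix b _).symm
  have hkey : W t * Real.exp (-∫ r in ε..t, τ r) = 1 := hGconst.trans hGε
  rw [hdet]
  have hexp_ne : Real.exp (-∫ r in ε..t, τ r) ≠ 0 := (Real.exp_pos _).ne'
  have : W t = (Real.exp (-∫ r in ε..t, τ r))⁻¹ := by
    field_simp at hkey ⊢
    linarith [hkey]
  rw [this, ← Real.exp_neg, neg_neg]

end Liouville

end LinearODE
end AuxLinearODE

/-- If `σ` restricts to a bijection of `𝓛` onto `𝓛`, then for every `ε ∈ I` the determinant
of `σ|_𝓛 : 𝓛 → 𝓛` equals `det(C)·exp(−∫_ε^{qε+p} tr B(t) dt)`. -/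
theorem stmt_12 {V : Type*} [NormedAddCommGroup V] [NormedSpace ℝ V] [FiniteDimensional ℝ V]
    (g : V →ₗ[ℝ] V →ₗ[ℝ] ℝ) (hg_symm : ∀ v w : V, g v w = g w v)
    (hg_nondeg : ∀ v : V, (∀ w : V, g v w = 0) → v = 0)
    (A : V →L[ℝ] V) (hA : ∀ v w : V, g (A v) w = g v (A w))
    (I : Set ℝ) (hIopen : IsOpen I) (hIne : I.Nonempty) (hIconn : I.OrdConnected)
    (f : ℝ → ℝ) (hf : ContDiffOn ℝ (⊤ : ℕ∞) f I)
    (q p : ℝ) (hq : 0 < q) (C : V →L[ℝ] V)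
    (hCiso : ∀ v w : V, g (C v) (C w) = g v w)
    (hCA : C.comp A = q ^ 2 • A.comp C)
    (hIbij : Set.BijOn (fun t => q * t + p) I I)
    (hfq : ∀ t ∈ I, f t = q ^ 2 * f (q * t + p))
    (B : ℝ → V →L[ℝ] V) (hB : ContDiffOn ℝ (⊤ : ℕ∞) B I)
    (hRic : ∀ t ∈ I,
      HasDerivAt B (f t • ContinuousLinearMap.id ℝ V + A - (B t).comp (B t)) t)
    (hbij : Set.BijOn (sigmaAct q p C) (firstOrderSol I B : Set (ℝ → V)) (firstOrderSol I B))
    (T : firstOrderSol I B →ₗ[ℝ] firstOrderSol I B)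
    (hT : ∀ u : firstOrderSol I B, (T u : ℝ → V) = sigmaAct q p C (u : ℝ → V))
    (ε : ℝ) (hε : ε ∈ I) :
    LinearMap.det T
      = LinearMap.det (C : V →ₗ[ℝ] V)
          * Real.exp (-∫ t in ε..(q * ε + p), LinearMap.trace ℝ V (B t : V →ₗ[ℝ] V)) := by
  classical
  haveI : CompleteSpace V := FiniteDimensional.complete ℝ V
  have hBc : ContinuousOn B I := hB.continuousOn
  let ev : firstOrderSol I B →ₗ[ℝ] V :=
    { toFun := fun u => (u : ℝ → V) ε
      map_add' := fun u v => rfl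
      map_smul' := fun c u => rfl }
  have hev_inj : Function.Injective ev := by
    intro u v huv
    apply Subtype.ext
    funext t
    by_cases ht : t ∈ I
    · rw [sol_eq_fundSol hIopen hIconn hBc hε u.2 ht,
        sol_eq_fundSol hIopen hIconn hBc hε v.2 ht]
      exact congrArg _ huv
    · rw [u.2.1 t ht, v.2.1 t ht]
  have hev_surj : Function.Surjective ev := by
    intro x
    refine ⟨⟨fun t => if t ∈ I then fundSol B ε t x else 0,
      extend_mem_firstOrderSol hIopen hIconn hBc hε x⟩, ?_⟩
    show (if ε ∈ I then fundSol B ε ε x else 0) = x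
    rw [if_pos hε, fundSol_at_eps]
    rfl
  let e : firstOrderSol I B ≃ₗ[ℝ] V := LinearEquiv.ofBijective ev ⟨hev_inj, hev_surj⟩
  have hqε : q * ε + p ∈ I := hIbij.mapsTo hε
  set S : V →ₗ[ℝ] V :=
    (e : firstOrderSol I B →ₗ[ℝ] V) ∘ₗ T ∘ₗ (e.symm : V →ₗ[ℝ] firstOrderSol I B) with hSdef
  have hdetS : LinearMap.det S = LinearMap.det T := LinearMap.det_conj T e
  have hkey : ((fundSol B ε (q * ε + p) : V →L[ℝ] V) : V →ₗ[ℝ] V) ∘ₗ S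
      = (C : V →ₗ[ℝ] V) := by
    apply LinearMap.ext
    intro v
    set u : firstOrderSol I B := e.symm v with hudef
    have huε : (u : ℝ → V) ε = v := by
      have := e.apply_symm_apply v
      rw [← hudef] at this
      exact this
    have hSv : S v = ((T u : firstOrderSol I B) : ℝ → V) ε := rfl
    show fundSol B ε (q * ε + p) (S v) = C v
    rw [hSv, ← sol_eq_fundSol hIopen hIconn hBc hε (T u).2 hqε]
    have happ := congrFun (hT u) (q * ε + p)
    rw [happ]
    show C ((u : ℝ → V) (q⁻¹ * (q * ε + p - p))) = C v
    rw [add_sub_cancel_right, inv_mul_cancel_left₀ hq.ne', huε]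
  have hdets := congrArg LinearMap.det hkey
  rw [LinearMap.det_comp, fundSol_det hIopen hIconn hBc hε hqε, hdetS] at hdets
  set X := ∫ t in ε..(q * ε + p), LinearMap.trace ℝ V ((B t : V →L[ℝ] V) : V →ₗ[ℝ] V) with hXdef
  rw [← hdets, Real.exp_neg, mul_comm (Real.exp X) (LinearMap.det T), mul_assoc,
    mul_inv_cancel₀ (Real.exp_pos X).ne', mul_one]
end
end
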